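/- arXiv:1608.03941 — 12 statements merged into one kernel-verified Lean document; each statement's English description precedes it below -/
import Mathlib

section
/- Let f, g, h, k : ℝ → ℝ be smooth, let δ₁, δ₂, δ₃, δ₄ be real constants with δ₁δ₃ ≠ 0, and let T : ℝ → ℝ be a smooth bijection with T'(t) ≠ 0 for all t. If u : ℝ × ℝ → ℝ is a smooth solution of u_t + f(t)u_x + g(t)u u_x + k(t)u_{xx} + h(t)u_{xxt} = 0, then the function ũ defined by ũ(T(t), δ₁x + δ₂) = δ₃u(t,x) + δ₄ is a smooth solution of ũ_{t̃} + f̃(t̃)ũ_{x̃} + g̃(t̃)ũ ũ_{x̃} + k̃(t̃)ũ_{x̃x̃} + h̃(t̃)ũ_{x̃x̃t̃} = 0, where the transformed coefficients are given by k̃(T(t)) = δ₁²k(t)/T'(t), f̃(T(t)) = δ₁(δ₃f(t) − δ₄g(t))/(T'(t)δ₃), g̃(T(t)) = δ₁g(t)/(T'(t)δ₃), and h̃(T(t)) = δ₁²h(t). -/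
/-- Partial derivative in the first (time) variable. -/
noncomputable def partialT (v : ℝ → ℝ → ℝ) (t x : ℝ) : ℝ := deriv (fun s => v s x) t

/-- Partial derivative in the second (space) variable. -/
noncomputable def partialX (v : ℝ → ℝ → ℝ) (t x : ℝ) : ℝ := deriv (fun y => v t y) x

/-- Second partial derivative in the space variable. -/
noncomputable def partialXX (v : ℝ → ℝ → ℝ) (t x : ℝ) : ℝ := deriv (fun y => partialX v t y) x

/-- Mixed third-order partial derivative: twice in space, once in time. -/
noncomputable def partialXXT (v : ℝ → ℝ → ℝ) (t x : ℝ) : ℝ := deriv (fun s => partialXX v s x) t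

/-!
Inverting `T`, the function `ũ` is the point transform
`ũ(s, y) = δ₃ u(T⁻¹ s, (y - δ₂) / δ₁) + δ₄` of `u`, smooth by the inverse function theorem.
The chain rule gives `ũ_x̃ = (δ₃/δ₁) u_x`, `ũ_x̃x̃ = (δ₃/δ₁²) u_xx`, `ũ_t̃ = (δ₃/T') u_t` and
`ũ_x̃x̃t̃ = (δ₃/(δ₁² T')) u_xxt`. Substituting, the left-hand side of the transformed equation is
`δ₃/T'` times that of the original one: the terms in `δ₄` coming from `g̃ ũ ũ_x̃` are cancelled by
the `-δ₄ g` in `f̃`.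
-/

open Function
open scoped ContDiff

theorem partialXX_eq_partialX_partialX (v : ℝ → ℝ → ℝ) :
    partialXX v = partialX (partialX v) := rfl

theorem partialXXT_eq_partialT_partialXX (v : ℝ → ℝ → ℝ) :
    partialXXT v = partialT (partialXX v) := rfl

def pointTransform (φ : ℝ → ℝ) (a b c d : ℝ) (v : ℝ → ℝ → ℝ) : ℝ → ℝ → ℝ :=
  fun s y => c * v (φ s) (a * y + b) + d

section

variable {φ : ℝ → ℝ} {a b c d : ℝ} {v : ℝ → ℝ → ℝ}

-- No differentiability is needed: `deriv` commutes with affine changes of variable.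
theorem partialX_pointTransform :
    partialX (pointTransform φ a b c d v) = pointTransform φ a b (c * a) 0 (partialX v) := by
  ext s y
  have hshift := deriv_comp_mul_left a (fun z => v (φ s) (z + b)) y
  simp only [partialX, pointTransform, deriv_add_const, deriv_const_mul_field', add_zero]
  simp only [deriv_comp_add_const, smul_eq_mul] at hshift
  rw [hshift]; ring

theorem partialXX_pointTransform :
    partialXX (pointTransform φ a b c d v) = pointTransform φ a b (c * a ^ 2) 0 (partialXX v) := by
  rw [partialXX_eq_partialX_partialX, partialX_pointTransform, partialX_pointTransform]
  rw [sq, mul_assoc]; rfl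

theorem partialT_pointTransform {s y : ℝ} (hφ : DifferentiableAt ℝ φ s)
    (hv : DifferentiableAt ℝ (fun t => v t (a * y + b)) (φ s)) :
    partialT (pointTransform φ a b c d v) s y = c * deriv φ s * partialT v (φ s) (a * y + b) := by
  have hchain : HasDerivAt (fun s => c * v (φ s) (a * y + b) + d)
      (c * (partialT v (φ s) (a * y + b) * deriv φ s)) s :=
    ((hv.hasDerivAt.comp s hφ.hasDerivAt).const_mul c).add_const d
  change deriv (fun s => c * v (φ s) (a * y + b) + d) s = _
  rw [hchain.deriv]
  ring

theorem partialXXT_pointTransform {s y : ℝ} (hφ : DifferentiableAt ℝ φ s)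
    (hv : DifferentiableAt ℝ (fun t => partialXX v t (a * y + b)) (φ s)) :
    partialXXT (pointTransform φ a b c d v) s y
      = c * a ^ 2 * deriv φ s * partialXXT v (φ s) (a * y + b) := by
  rw [partialXXT_eq_partialT_partialXX, partialXX_pointTransform, partialT_pointTransform hφ hv]
  rfl

theorem ContDiff.pointTransform {n : WithTop ℕ∞} (hφ : ContDiff ℝ n φ)
    (hv : ContDiff ℝ n (uncurry v)) : ContDiff ℝ n (uncurry (pointTransform φ a b c d v)) :=
  (contDiff_const.mul (hv.comp ((hφ.comp contDiff_fst).prodMk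
      ((contDiff_const.mul contDiff_snd).add contDiff_const)))).add contDiff_const

theorem ContDiff.uncurry_partialX {m n : WithTop ℕ∞} (hv : ContDiff ℝ n (uncurry v))
    (hmn : m + 1 ≤ n) : ContDiff ℝ m (uncurry (partialX v)) := by
  have hdiff : Differentiable ℝ (uncurry v) := hv.differentiable
    (zero_lt_one.trans_le (le_add_self.trans hmn)).ne'
  have hfderiv : uncurry (partialX v) = fun p => fderiv ℝ (uncurry v) p (0, 1) := by
    funext p
    have hslice : HasDerivAt (fun y : ℝ => (p.1, y)) (0, 1) p.2 :=
      (hasDerivAt_const p.2 p.1).prodMk (hasDerivAt_id p.2)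
    exact ((hdiff p).hasFDerivAt.comp_hasDerivAt p.2 hslice).deriv
  rw [hfderiv]
  exact (hv.fderiv_right hmn).clm_apply contDiff_const

theorem Differentiable.differentiableAt_uncurry_left (hv : Differentiable ℝ (uncurry v))
    (t x : ℝ) : DifferentiableAt ℝ (fun s => v s x) t :=
  (hv (t, x)).comp (f := fun s => (s, x)) t
    (differentiableAt_id.prodMk (differentiableAt_const x))

end

theorem ContDiff.invFun_of_deriv_ne_zero {n : WithTop ℕ∞} {T : ℝ → ℝ} (hT : ContDiff ℝ n T)
    (hn : n ≠ 0) (hTbij : Bijective T) (hT' : ∀ t, deriv T t ≠ 0) :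
    ContDiff ℝ n (invFun T) := by
  refine contDiff_iff_contDiffAt.2 fun s => ?_
  obtain ⟨t, rfl⟩ := hTbij.2 s
  have hderiv := ((hT.differentiable hn t).hasDerivAt).hasFDerivAt_equiv (hT' t)
  refine (hT.contDiffAt.to_localInverse hderiv hn).congr_of_eventuallyEq ?_
  filter_upwards [(hT.contDiffAt.hasStrictFDerivAt' hderiv hn).eventually_right_inverse]
    with y hy
  exact hTbij.1 ((rightInverse_invFun hTbij.2 y).trans hy.symm)

theorem hasDerivAt_invFun_apply {T : ℝ → ℝ} {t : ℝ} (hTbij : Bijective T)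
    (hcont : ContinuousAt (invFun T) (T t)) (hT : DifferentiableAt ℝ T t) (hT' : deriv T t ≠ 0) :
    HasDerivAt (invFun T) (deriv T t)⁻¹ (T t) := by
  refine HasDerivAt.of_local_left_inverse hcont ?_ hT'
    (Filter.Eventually.of_forall (rightInverse_invFun hTbij.2))
  rw [leftInverse_invFun hTbij.1 t]
  exact hT.hasDerivAt

theorem eq_pointTransform_invFun {T : ℝ → ℝ} (hTbij : Bijective T) {δ₁ δ₂ δ₃ δ₄ : ℝ}
    (hδ₁ : δ₁ ≠ 0) {u w : ℝ → ℝ → ℝ} (hw : ∀ t x, w (T t) (δ₁ * x + δ₂) = δ₃ * u t x + δ₄) :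
    w = pointTransform (invFun T) δ₁⁻¹ (-(δ₁⁻¹ * δ₂)) δ₃ δ₄ u := by
  funext s y
  obtain ⟨t, rfl⟩ := hTbij.2 s
  have hy : y = δ₁ * (δ₁⁻¹ * y + -(δ₁⁻¹ * δ₂)) + δ₂ := by field_simp; ring
  conv_lhs => rw [hy, hw]
  rw [pointTransform, leftInverse_invFun hTbij.1 t]

theorem stmt_0_general (f g h k : ℝ → ℝ)
    (δ₁ δ₂ δ₃ δ₄ : ℝ) (hδ : δ₁ * δ₃ ≠ 0)
    (T : ℝ → ℝ) (hT : ContDiff ℝ (⊤ : ℕ∞) T) (hTbij : Function.Bijective T)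
    (hT' : ∀ t, deriv T t ≠ 0)
    (u : ℝ → ℝ → ℝ) (hu : ContDiff ℝ (⊤ : ℕ∞) (fun p : ℝ × ℝ => u p.1 p.2))
    (hsol : ∀ t x, partialT u t x + f t * partialX u t x + g t * u t x * partialX u t x
      + k t * partialXX u t x + h t * partialXXT u t x = 0)
    (ftil gtil htil ktil : ℝ → ℝ)
    (hktil : ∀ t, ktil (T t) = δ₁ ^ 2 / deriv T t * k t)
    (hftil : ∀ t, ftil (T t) = δ₁ / (deriv T t * δ₃) * (δ₃ * f t - δ₄ * g t))
    (hgtil : ∀ t, gtil (T t) = δ₁ / (deriv T t * δ₃) * g t)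
    (hhtil : ∀ t, htil (T t) = δ₁ ^ 2 * h t)
    (util : ℝ → ℝ → ℝ)
    (hutil : ∀ t x, util (T t) (δ₁ * x + δ₂) = δ₃ * u t x + δ₄) :
    ContDiff ℝ (⊤ : ℕ∞) (fun p : ℝ × ℝ => util p.1 p.2) ∧
    ∀ t x, partialT util t x + ftil t * partialX util t x
      + gtil t * util t x * partialX util t x
      + ktil t * partialXX util t x + htil t * partialXXT util t x = 0 := by
  have hδ₁ : δ₁ ≠ 0 := left_ne_zero_of_mul hδ
  have hδ₃ : δ₃ ≠ 0 := right_ne_zero_of_mul hδ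
  have hTi : ContDiff ℝ ∞ (invFun T) := hT.invFun_of_deriv_ne_zero (by simp) hTbij hT'
  obtain rfl := eq_pointTransform_invFun hTbij hδ₁ hutil
  refine ⟨hTi.pointTransform hu, fun s y => ?_⟩
  obtain ⟨t, rfl⟩ := hTbij.2 s
  have hTi' : HasDerivAt (invFun T) (deriv T t)⁻¹ (T t) :=
    hasDerivAt_invFun_apply hTbij hTi.continuous.continuousAt
      (hT.differentiable (by simp) t) (hT' t)
  have huXX : ContDiff ℝ ∞ (uncurry (partialXX u)) :=
    (hu.uncurry_partialX (m := ∞) (by simp)).uncurry_partialX (by simp)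
  rw [partialT_pointTransform hTi'.differentiableAt
      ((hu.differentiable (by simp)).differentiableAt_uncurry_left _ _),
    partialXXT_pointTransform hTi'.differentiableAt
      ((huXX.differentiable (by simp)).differentiableAt_uncurry_left _ _),
    partialX_pointTransform, partialXX_pointTransform, hTi'.deriv,
    hktil, hftil, hgtil, hhtil]
  simp only [pointTransform, leftInverse_invFun hTbij.1 t]
  generalize δ₁⁻¹ * y + -(δ₁⁻¹ * δ₂) = x
  field_simp [hT' t]
  linear_combination δ₃ ^ 2 * hsol t x

/-- the equivalence transformations of the class of variable-coefficient
BBMB equations `u_t + f(t)u_x + g(t)u u_x + k(t)u_xx + h(t)u_xxt = 0` map solutions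
to solutions of the transformed equation. -/
theorem stmt_0 (f g h k : ℝ → ℝ)
    (hf : ContDiff ℝ (⊤ : ℕ∞) f) (hg : ContDiff ℝ (⊤ : ℕ∞) g)
    (hh : ContDiff ℝ (⊤ : ℕ∞) h) (hk : ContDiff ℝ (⊤ : ℕ∞) k)
    (δ₁ δ₂ δ₃ δ₄ : ℝ) (hδ : δ₁ * δ₃ ≠ 0)
    (T : ℝ → ℝ) (hT : ContDiff ℝ (⊤ : ℕ∞) T) (hTbij : Function.Bijective T)
    (hT' : ∀ t, deriv T t ≠ 0)
    (u : ℝ → ℝ → ℝ) (hu : ContDiff ℝ (⊤ : ℕ∞) (fun p : ℝ × ℝ => u p.1 p.2))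
    (hsol : ∀ t x, partialT u t x + f t * partialX u t x + g t * u t x * partialX u t x
      + k t * partialXX u t x + h t * partialXXT u t x = 0)
    (ftil gtil htil ktil : ℝ → ℝ)
    (hktil : ∀ t, ktil (T t) = δ₁ ^ 2 / deriv T t * k t)
    (hftil : ∀ t, ftil (T t) = δ₁ / (deriv T t * δ₃) * (δ₃ * f t - δ₄ * g t))
    (hgtil : ∀ t, gtil (T t) = δ₁ / (deriv T t * δ₃) * g t)
    (hhtil : ∀ t, htil (T t) = δ₁ ^ 2 * h t)
    (util : ℝ → ℝ → ℝ)
    (hutil : ∀ t x, util (T t) (δ₁ * x + δ₂) = δ₃ * u t x + δ₄) :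
    ContDiff ℝ (⊤ : ℕ∞) (fun p : ℝ × ℝ => util p.1 p.2) ∧
    ∀ t x, partialT util t x + ftil t * partialX util t x
      + gtil t * util t x * partialX util t x
      + ktil t * partialXX util t x + htil t * partialXXT util t x = 0 :=
  stmt_0_general f g h k δ₁ δ₂ δ₃ δ₄ hδ T hT hTbij hT' u hu hsol ftil gtil htil ktil hktil hftil
    hgtil hhtil util hutil
end

section
/- Let K, H, F : ℝ → ℝ be smooth, and let δ₀, δ₁, δ₂, δ₃ be real constants with δ₁δ₃ ≠ 0. If u : ℝ × ℝ → ℝ is a smooth solution of u_t + u u_x + K(t)u_{xx} + H(t)u_{xxt} = F(t), then the function ũ defined by ũ((δ₁/δ₃)t + δ₀, δ₁x + δ₂) = δ₃u(t,x) is a smooth solution of ũ_{t̃} + ũ ũ_{x̃} + K̃(t̃)ũ_{x̃x̃} + H̃(t̃)ũ_{x̃x̃t̃} = F̃(t̃), where K̃((δ₁/δ₃)t + δ₀) = δ₁δ₃K(t), H̃((δ₁/δ₃)t + δ₀) = δ₁²H(t), and F̃((δ₁/δ₃)t + δ₀) = (δ₃²/δ₁)F(t). -/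
/-!
The point transformation is affine in each variable separately, so every partial derivative
of the transformed function is the same affine pullback of the corresponding partial derivative
of `u`, times a constant; no differentiability is needed for this, since `deriv` commutes with
affine reparametrisation even where it takes its junk value. Substituting into the equation for
`u` and clearing the constants `δ₁, δ₃` gives the equation with coefficients `K̃, H̃, F̃`.
-/

def affineRescale (k a b c d : ℝ) (v : ℝ → ℝ → ℝ) (s y : ℝ) : ℝ :=
  k * v (a * s + b) (c * y + d)

lemma deriv_const_mul_comp_affine (f : ℝ → ℝ) (k c d y : ℝ) :
    deriv (fun y => k * f (c * y + d)) y = k * c * deriv f (c * y + d) := by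
  rw [deriv_const_mul_field, mul_assoc]
  congr 1
  exact (deriv_comp_mul_left (f := fun z => f (z + d)) c y).trans
    (by rw [smul_eq_mul, deriv_comp_add_const])

section affineRescale

variable (k a b c d : ℝ) (v : ℝ → ℝ → ℝ)

lemma partialT_affineRescale :
    partialT (affineRescale k a b c d v) = affineRescale (k * a) a b c d (partialT v) := by
  funext s y
  exact deriv_const_mul_comp_affine (fun t => v t (c * y + d)) k a b s

lemma partialX_affineRescale :
    partialX (affineRescale k a b c d v) = affineRescale (k * c) a b c d (partialX v) := by
  funext s y
  exact deriv_const_mul_comp_affine (v (a * s + b)) k c d y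

lemma partialXX_affineRescale :
    partialXX (affineRescale k a b c d v)
      = affineRescale (k * c * c) a b c d (partialXX v) := by
  change partialX (partialX _) = affineRescale _ a b c d (partialX (partialX v))
  rw [partialX_affineRescale, partialX_affineRescale]

lemma partialXXT_affineRescale :
    partialXXT (affineRescale k a b c d v)
      = affineRescale (k * c * c * a) a b c d (partialXXT v) := by
  change partialT (partialXX _) = affineRescale _ a b c d (partialT (partialXX v))
  rw [partialXX_affineRescale, partialT_affineRescale]

lemma contDiff_affineRescale {n : WithTop ℕ∞}
    (hv : ContDiff ℝ n (fun p : ℝ × ℝ => v p.1 p.2)) :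
    ContDiff ℝ n (fun p : ℝ × ℝ => affineRescale k a b c d v p.1 p.2) :=
  contDiff_const.mul <| hv.comp <|
    ((contDiff_const.mul contDiff_fst).add contDiff_const).prodMk
      ((contDiff_const.mul contDiff_snd).add contDiff_const)

end affineRescale

theorem stmt_1_general (K H F : ℝ → ℝ)
    (δ₀ δ₁ δ₂ δ₃ : ℝ) (hδ : δ₁ * δ₃ ≠ 0)
    (u : ℝ → ℝ → ℝ) (hu : ContDiff ℝ (⊤ : ℕ∞) (fun p : ℝ × ℝ => u p.1 p.2))
    (hsol : ∀ t x, partialT u t x + u t x * partialX u t x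
      + K t * partialXX u t x + H t * partialXXT u t x = F t)
    (Ktil Htil Ftil : ℝ → ℝ)
    (hKtil : ∀ t, Ktil (δ₁ / δ₃ * t + δ₀) = δ₁ * δ₃ * K t)
    (hHtil : ∀ t, Htil (δ₁ / δ₃ * t + δ₀) = δ₁ ^ 2 * H t)
    (hFtil : ∀ t, Ftil (δ₁ / δ₃ * t + δ₀) = δ₃ ^ 2 / δ₁ * F t)
    (util : ℝ → ℝ → ℝ)
    (hutil : ∀ t x, util (δ₁ / δ₃ * t + δ₀) (δ₁ * x + δ₂) = δ₃ * u t x) :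
    ContDiff ℝ (⊤ : ℕ∞) (fun p : ℝ × ℝ => util p.1 p.2) ∧
    ∀ t x, partialT util t x + util t x * partialX util t x
      + Ktil t * partialXX util t x + Htil t * partialXXT util t x = Ftil t := by
  obtain ⟨hδ₁, hδ₃⟩ := mul_ne_zero_iff.mp hδ
  set a := δ₃ / δ₁
  set c := 1 / δ₁
  have time_inv : ∀ s, δ₁ / δ₃ * (a * s - a * δ₀) + δ₀ = s := fun s => by
    simp only [a]; field_simp; ring
  have util_eq : util = affineRescale δ₃ a (-(a * δ₀)) c (-(c * δ₂)) u := by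
    funext s y
    have space_inv : δ₁ * (c * y - c * δ₂) + δ₂ = y := by
      simp only [c]; field_simp; ring
    simpa only [affineRescale, ← sub_eq_add_neg, time_inv, space_inv] using
      hutil (a * s - a * δ₀) (c * y - c * δ₂)
  refine ⟨util_eq ▸ contDiff_affineRescale _ _ _ _ _ u hu, fun s y => ?_⟩
  rw [util_eq, partialT_affineRescale, partialX_affineRescale, partialXX_affineRescale,
    partialXXT_affineRescale]
  simp only [affineRescale, ← sub_eq_add_neg]
  rw [← time_inv s, hKtil, hHtil, hFtil, time_inv]
  have hE := hsol (a * s - a * δ₀) (c * y - c * δ₂)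
  generalize a * s - a * δ₀ = t at hE ⊢
  generalize c * y - c * δ₂ = x at hE ⊢
  simp only [a, c]
  field_simp
  linear_combination hE

/-- the equivalence transformations of the class of BBMB equations with
a forcing term `u_t + u u_x + K(t)u_xx + H(t)u_xxt = F(t)` map solutions to solutions
of the transformed equation. -/
theorem stmt_1 (K H F : ℝ → ℝ)
    (hK : ContDiff ℝ (⊤ : ℕ∞) K) (hH : ContDiff ℝ (⊤ : ℕ∞) H) (hF : ContDiff ℝ (⊤ : ℕ∞) F)
    (δ₀ δ₁ δ₂ δ₃ : ℝ) (hδ : δ₁ * δ₃ ≠ 0)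
    (u : ℝ → ℝ → ℝ) (hu : ContDiff ℝ (⊤ : ℕ∞) (fun p : ℝ × ℝ => u p.1 p.2))
    (hsol : ∀ t x, partialT u t x + u t x * partialX u t x
      + K t * partialXX u t x + H t * partialXXT u t x = F t)
    (Ktil Htil Ftil : ℝ → ℝ)
    (hKtil : ∀ t, Ktil (δ₁ / δ₃ * t + δ₀) = δ₁ * δ₃ * K t)
    (hHtil : ∀ t, Htil (δ₁ / δ₃ * t + δ₀) = δ₁ ^ 2 * H t)
    (hFtil : ∀ t, Ftil (δ₁ / δ₃ * t + δ₀) = δ₃ ^ 2 / δ₁ * F t)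
    (util : ℝ → ℝ → ℝ)
    (hutil : ∀ t x, util (δ₁ / δ₃ * t + δ₀) (δ₁ * x + δ₂) = δ₃ * u t x) :
    ContDiff ℝ (⊤ : ℕ∞) (fun p : ℝ × ℝ => util p.1 p.2) ∧
    ∀ t x, partialT util t x + util t x * partialX util t x
      + Ktil t * partialXX util t x + Htil t * partialXXT util t x = Ftil t :=
  stmt_1_general K H F δ₀ δ₁ δ₂ δ₃ hδ u hu hsol Ktil Htil Ftil hKtil hHtil hFtil util hutil
end

section
/- Let f, g, h, k : ℝ → ℝ be smooth with g(t) ≠ 0 for all t, and set T(t) = ∫₀ᵗ g(s)ds. If u : ℝ × ℝ → ℝ is a smooth solution of u_t + f(t)u_x + g(t)u u_x + k(t)u_{xx} + h(t)u_{xxt} = 0, then the function v defined by v(T(t), x) = u(t,x) + f(t)/g(t) is a smooth solution of v_{t̃} + v v_{x̃} + K(t̃)v_{x̃x̃} + H(t̃)v_{x̃x̃t̃} = F(t̃), where K(T(t)) = k(t)/g(t), H(T(t)) = h(t), and F(T(t)) = (1/g(t))·d/dt(f(t)/g(t)). -/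
open Filter Topology

theorem HasStrictDerivAt.hasDerivAt_of_comp_eq {𝕜 : Type*} [NontriviallyNormedField 𝕜]
    [CompleteSpace 𝕜] {T φ ψ : 𝕜 → 𝕜} {T' ψ' a : 𝕜}
    (hT : HasStrictDerivAt T T' a) (hT0 : T' ≠ 0) (hψ : HasDerivAt ψ ψ' a)
    (h : ∀ᶠ s in 𝓝 a, φ (T s) = ψ s) : HasDerivAt φ (ψ' / T') (T a) := by
  set S := hT.localInverse T T' a hT0
  have hS : HasStrictDerivAt S T'⁻¹ (T a) := hT.to_localInverse hT0
  have hSa : S (T a) = a := (hT.eventually_left_inverse hT0).self_of_nhds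
  have hψS : HasDerivAt (ψ ∘ S) (ψ' * T'⁻¹) (T a) := (hSa ▸ hψ).comp (T a) hS.hasDerivAt
  have hS_tendsto : Tendsto S (𝓝 (T a)) (𝓝 a) := by
    simpa only [ContinuousAt, hSa] using hS.hasDerivAt.continuousAt
  refine (hψS.congr_of_eventuallyEq ?_).congr_deriv (div_eq_mul_inv ψ' T').symm
  filter_upwards [hT.eventually_right_inverse hT0, hS_tendsto.eventually h] with τ hTS hφψ
  rw [Function.comp_apply, ← hφψ, hTS]

theorem ContDiffAt.contDiffAt_of_comp_eq {T : ℝ → ℝ} {v w : ℝ → ℝ → ℝ} {n : WithTop ℕ∞}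
    {T' t x : ℝ} (hT : ContDiffAt ℝ n T t) (hn : n ≠ 0) (hT' : HasDerivAt T T' t) (hT0 : T' ≠ 0)
    (hw : ContDiffAt ℝ n (fun p : ℝ × ℝ => w p.1 p.2) (t, x))
    (h : ∀ᶠ p in 𝓝 (t, x), v (T p.1) p.2 = w p.1 p.2) :
    ContDiffAt ℝ n (fun p : ℝ × ℝ => v p.1 p.2) (T t, x) := by
  have hF := hT'.hasFDerivAt_equiv hT0
  set S := hT.localInverse hF hn
  have hS : ContDiffAt ℝ n S (T t) := hT.to_localInverse hF hn
  have hSa : S (T t) = t := hT.localInverse_apply_image hF hn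
  have hSx : ContDiffAt ℝ n (fun p : ℝ × ℝ => (S p.1, p.2)) (T t, x) :=
    (hS.comp (T t, x) contDiffAt_fst).prodMk contDiffAt_snd
  have hwS : ContDiffAt ℝ n (fun p : ℝ × ℝ => w (S p.1) p.2) (T t, x) := by
    rw [← hSa] at hw; exact hw.comp (T t, x) hSx
  have hSx_tendsto : Tendsto (fun p : ℝ × ℝ => (S p.1, p.2)) (𝓝 (T t, x)) (𝓝 (t, x)) := by
    simpa only [ContinuousAt, hSa] using hSx.continuousAt
  refine hwS.congr_of_eventuallyEq ?_
  have hTS : ∀ᶠ τ in 𝓝 (T t), T (S τ) = τ :=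
    (hT.hasStrictFDerivAt' hF hn).eventually_right_inverse
  filter_upwards [continuousAt_fst.eventually hTS, hSx_tendsto.eventually h] with p hTSp hvw
  rw [← hvw, hTSp]

theorem ContDiff.intervalIntegral_right {g : ℝ → ℝ} {n : ℕ∞} (hg : ContDiff ℝ n g) (a : ℝ) :
    ContDiff ℝ (n + 1) (fun t => ∫ s in a..t, g s) := by
  have hd : ∀ t, HasDerivAt (fun t => ∫ s in a..t, g s) (g t) t := fun t =>
    (hg.continuous.integral_hasStrictDerivAt a t).hasDerivAt
  rw [contDiff_succ_iff_deriv]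
  refine ⟨fun t => (hd t).differentiableAt, by simp, ?_⟩
  rwa [funext fun t => (hd t).deriv]

theorem partialX_congr {v w : ℝ → ℝ → ℝ} {s t : ℝ} (h : ∀ y, v s y = w t y) (x : ℝ) :
    partialX v s x = partialX w t x := by
  simp only [partialX, h]

theorem partialT_of_comp_eq {T : ℝ → ℝ} {v w : ℝ → ℝ → ℝ} {T' t x : ℝ}
    (hT : HasStrictDerivAt T T' t) (hT0 : T' ≠ 0) (hw : DifferentiableAt ℝ (fun s => w s x) t)
    (h : ∀ s, v (T s) x = w s x) : partialT v (T t) x = partialT w t x / T' :=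
  (hT.hasDerivAt_of_comp_eq hT0 hw.hasDerivAt (.of_forall h)).deriv

theorem ContDiff.partialX {u : ℝ → ℝ → ℝ} {m n : WithTop ℕ∞}
    (hu : ContDiff ℝ n (fun p : ℝ × ℝ => u p.1 p.2)) (hmn : m + 1 ≤ n) :
    ContDiff ℝ m (fun p : ℝ × ℝ => partialX u p.1 p.2) :=
  (hu.comp ((contDiff_fst.comp contDiff_fst).prodMk contDiff_snd)).fderiv_apply contDiff_snd
    contDiff_const hmn

theorem ContDiff.differentiableAt_slice {u : ℝ → ℝ → ℝ} {n : WithTop ℕ∞}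
    (hu : ContDiff ℝ n (fun p : ℝ × ℝ => u p.1 p.2)) (hn : n ≠ 0) (t x : ℝ) :
    DifferentiableAt ℝ (fun s => u s x) t :=
  (hu.comp (contDiff_id.prodMk contDiff_const)).differentiable hn t

theorem stmt_2_general (f g h k : ℝ → ℝ)
    (hf : ContDiff ℝ (⊤ : ℕ∞) f) (hg : ContDiff ℝ (⊤ : ℕ∞) g)
    (hg0 : ∀ t, g t ≠ 0)
    (T : ℝ → ℝ) (hTdef : ∀ t, T t = ∫ s in (0:ℝ)..t, g s)
    (u : ℝ → ℝ → ℝ) (hu : ContDiff ℝ (⊤ : ℕ∞) (fun p : ℝ × ℝ => u p.1 p.2))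
    (hsol : ∀ t x, partialT u t x + f t * partialX u t x + g t * u t x * partialX u t x
      + k t * partialXX u t x + h t * partialXXT u t x = 0)
    (K H F : ℝ → ℝ)
    (hK : ∀ t, K (T t) = k t / g t)
    (hH : ∀ t, H (T t) = h t)
    (hF : ∀ t, F (T t) = 1 / g t * deriv (fun s => f s / g s) t)
    (v : ℝ → ℝ → ℝ)
    (hv : ∀ t x, v (T t) x = u t x + f t / g t) :
    ContDiffOn ℝ (⊤ : ℕ∞) (fun p : ℝ × ℝ => v p.1 p.2) (Set.range T ×ˢ Set.univ) ∧
    ∀ t x, partialT v (T t) x + v (T t) x * partialX v (T t) x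
      + K (T t) * partialXX v (T t) x + H (T t) * partialXXT v (T t) x = F (T t) := by
  have htop : ((⊤ : ℕ∞) : WithTop ℕ∞) ≠ 0 := by simp
  have hq : ContDiff ℝ (⊤ : ℕ∞) (fun s => f s / g s) := hf.div hg hg0
  have hT_eq : T = fun t => ∫ s in (0:ℝ)..t, g s := funext hTdef
  have hT : ∀ t, HasStrictDerivAt T (g t) t := hT_eq ▸ hg.continuous.integral_hasStrictDerivAt 0
  have hT_smooth : ContDiff ℝ (⊤ : ℕ∞) T := hT_eq ▸ by simpa using hg.intervalIntegral_right 0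
  let w : ℝ → ℝ → ℝ := fun t x => u t x + f t / g t
  have hvw : ∀ t x, v (T t) x = w t x := hv
  have hw : ContDiff ℝ (⊤ : ℕ∞) (fun p : ℝ × ℝ => w p.1 p.2) := hu.add (hq.comp contDiff_fst)
  have huxx : ContDiff ℝ (⊤ : ℕ∞) (fun p : ℝ × ℝ => partialXX u p.1 p.2) :=
    (hu.partialX le_rfl).partialX le_rfl
  have hvx : ∀ t x, partialX v (T t) x = partialX u t x := fun t x => by
    rw [partialX_congr (hvw t) x, partialX, partialX, deriv_add_const]
  have hvxx : ∀ t x, partialXX v (T t) x = partialXX u t x := fun t =>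
    partialX_congr (hvx t)
  have hvt : ∀ t x, partialT v (T t) x
      = (partialT u t x + deriv (fun s => f s / g s) t) / g t := fun t x => by
    rw [partialT_of_comp_eq (hT t) (hg0 t) (hw.differentiableAt_slice htop t x) (hvw · x)]
    exact congrArg (· / g t) ((hu.differentiableAt_slice htop t x).hasDerivAt.add
      (hq.differentiable htop t).hasDerivAt).deriv
  have hvxxt : ∀ t x, partialXXT v (T t) x = partialXXT u t x / g t := fun t x =>
    partialT_of_comp_eq (hT t) (hg0 t) (huxx.differentiableAt_slice htop t x) (hvxx · x)
  refine ⟨?_, fun t x => ?_⟩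
  · rintro ⟨_, x⟩ ⟨⟨t, rfl⟩, -⟩
    exact (hT_smooth.contDiffAt.contDiffAt_of_comp_eq htop (hT t).hasDerivAt (hg0 t)
      hw.contDiffAt (.of_forall fun p => hvw p.1 p.2)).contDiffWithinAt
  · rw [hvt, hvxx, hvx, hvxxt, hv, hK, hH, hF]
    field_simp [hg0 t]
    linear_combination hsol t x

/-- the point transformation `t̃ = ∫ g dt`, `x̃ = x`, `v = u + f/g` maps
solutions of `u_t + f(t)u_x + g(t)u u_x + k(t)u_xx + h(t)u_xxt = 0` to solutions of the
imaged BBMB equation with a forcing term `v_t + v v_x + K(t)v_xx + H(t)v_xxt = F(t)`. -/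
theorem stmt_2 (f g h k : ℝ → ℝ)
    (hf : ContDiff ℝ (⊤ : ℕ∞) f) (hg : ContDiff ℝ (⊤ : ℕ∞) g)
    (hh : ContDiff ℝ (⊤ : ℕ∞) h) (hk : ContDiff ℝ (⊤ : ℕ∞) k)
    (hg0 : ∀ t, g t ≠ 0)
    (T : ℝ → ℝ) (hTdef : ∀ t, T t = ∫ s in (0:ℝ)..t, g s)
    (u : ℝ → ℝ → ℝ) (hu : ContDiff ℝ (⊤ : ℕ∞) (fun p : ℝ × ℝ => u p.1 p.2))
    (hsol : ∀ t x, partialT u t x + f t * partialX u t x + g t * u t x * partialX u t x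
      + k t * partialXX u t x + h t * partialXXT u t x = 0)
    (K H F : ℝ → ℝ)
    (hK : ∀ t, K (T t) = k t / g t)
    (hH : ∀ t, H (T t) = h t)
    (hF : ∀ t, F (T t) = 1 / g t * deriv (fun s => f s / g s) t)
    (v : ℝ → ℝ → ℝ)
    (hv : ∀ t x, v (T t) x = u t x + f t / g t) :
    ContDiffOn ℝ (⊤ : ℕ∞) (fun p : ℝ × ℝ => v p.1 p.2) (Set.range T ×ˢ Set.univ) ∧
    ∀ t x, partialT v (T t) x + v (T t) x * partialX v (T t) x
      + K (T t) * partialXX v (T t) x + H (T t) * partialXXT v (T t) x = F (T t) :=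
  stmt_2_general f g h k hf hg hg0 T hTdef u hu hsol K H F hK hH hF v hv
end

section
/- Let ε, λ, δ, ρ be real constants with ελ ≠ 0, and let s be any real number. If u : {t > 0} × ℝ → ℝ is a smooth solution of u_t + u u_x + λ t^{ρ−1} u_{xx} + ε t^{ρ} u_{xxt} = δ t^{(ρ−4)/2} for t > 0, then the function v(t,x) = e^{(ρ−2)s} u(e^{−2s}t, e^{−ρs}x) is also a smooth solution of the same equation for t > 0. -/
open Set

def IsSolution (lam ε δ ρ : ℝ) (u : ℝ → ℝ → ℝ) : Prop :=
  ∀ t, 0 < t → ∀ x, partialT u t x + u t x * partialX u t x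
    + lam * t ^ (ρ - 1) * partialXX u t x + ε * t ^ ρ * partialXXT u t x
    = δ * t ^ ((ρ - 4) / 2)

def rescale (A B C : ℝ) (u : ℝ → ℝ → ℝ) (t x : ℝ) : ℝ := C * u (A * t) (B * x)

section Rescale

variable (A B C : ℝ) (u : ℝ → ℝ → ℝ)

lemma partialT_rescale : partialT (rescale A B C u) = rescale A B (C * A) (partialT u) := by
  funext t x
  simp only [partialT, rescale, deriv_const_mul_field,
    deriv_comp_mul_left A (fun s => u s (B * x)), smul_eq_mul, mul_assoc]

lemma partialX_rescale : partialX (rescale A B C u) = rescale A B (C * B) (partialX u) := by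
  funext t x
  simp only [partialX, rescale, deriv_const_mul_field,
    deriv_comp_mul_left B (fun y => u (A * t) y), smul_eq_mul, mul_assoc]

lemma partialXX_rescale :
    partialXX (rescale A B C u) = rescale A B (C * B * B) (partialXX u) := by
  change partialX (partialX _) = rescale A B _ (partialX (partialX u))
  rw [partialX_rescale, partialX_rescale]

lemma partialXXT_rescale :
    partialXXT (rescale A B C u) = rescale A B (C * B * B * A) (partialXXT u) := by
  change partialT (partialXX _) = rescale A B _ (partialT (partialXX u))
  rw [partialXX_rescale, partialT_rescale]

variable {A B C u}

lemma contDiffOn_rescale {n : WithTop ℕ∞}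
    (hu : ContDiffOn ℝ n (fun p : ℝ × ℝ => u p.1 p.2) (Ioi 0 ×ˢ univ)) (hA : 0 < A) :
    ContDiffOn ℝ n (fun p : ℝ × ℝ => rescale A B C u p.1 p.2) (Ioi 0 ×ˢ univ) := by
  have hscale : ContDiff ℝ n (fun p : ℝ × ℝ => (A * p.1, B * p.2)) :=
    (contDiff_const.mul contDiff_fst).prodMk (contDiff_const.mul contDiff_snd)
  have hmaps : MapsTo (fun p : ℝ × ℝ => (A * p.1, B * p.2)) (Ioi 0 ×ˢ univ) (Ioi 0 ×ˢ univ) :=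
    fun p hp => ⟨mul_pos hA hp.1, mem_univ _⟩
  exact contDiffOn_const.mul (hu.comp hscale.contDiffOn hmaps)

lemma IsSolution.rescale {lam ε δ ρ : ℝ} (hu : IsSolution lam ε δ ρ u) (hA : 0 < A)
    (hCB : C * B = A) (hB : B ^ 2 = A ^ ρ) (hC : C * A ^ ((ρ - 2) / 2) = 1) :
    IsSolution lam ε δ ρ (rescale A B C u) := by
  intro t ht x
  have H := hu (A * t) (mul_pos hA ht) (B * x)
  rw [Real.mul_rpow hA.le ht.le, Real.mul_rpow hA.le ht.le, Real.mul_rpow hA.le ht.le] at H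
  have hρ1 : A ^ (ρ - 1) * A = A ^ ρ := by
    rw [Real.rpow_sub_one hA.ne', div_mul_cancel₀ _ hA.ne']
  have hρ4 : A ^ ((ρ - 4) / 2) * A = A ^ ((ρ - 2) / 2) := by
    rw [← Real.rpow_add_one hA.ne']; ring_nf
  rw [partialT_rescale, partialX_rescale, partialXX_rescale, partialXXT_rescale]
  simp only [_root_.rescale]
  linear_combination (C * A) * H
    + (C * u (A * t) (B * x) * partialX u (A * t) (B * x)) * hCB
    + (lam * t ^ (ρ - 1) * partialXX u (A * t) (B * x) * C) * (hB - hρ1)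
    + (ε * t ^ ρ * partialXXT u (A * t) (B * x) * C * A) * hB
    + (δ * t ^ ((ρ - 4) / 2)) * (C * hρ4 + hC)

end Rescale

theorem stmt_4_general (ε lam δ ρ s : ℝ)
    (u : ℝ → ℝ → ℝ)
    (hu : ContDiffOn ℝ (⊤ : ℕ∞) (fun p : ℝ × ℝ => u p.1 p.2) (Set.Ioi 0 ×ˢ Set.univ))
    (hsol : ∀ t, 0 < t → ∀ x, partialT u t x + u t x * partialX u t x
      + lam * t ^ (ρ - 1) * partialXX u t x + ε * t ^ ρ * partialXXT u t x
      = δ * t ^ ((ρ - 4) / 2))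
    (v : ℝ → ℝ → ℝ)
    (hv : ∀ t x, v t x
      = Real.exp ((ρ - 2) * s) * u (Real.exp (-2 * s) * t) (Real.exp (-ρ * s) * x)) :
    ContDiffOn ℝ (⊤ : ℕ∞) (fun p : ℝ × ℝ => v p.1 p.2) (Set.Ioi 0 ×ˢ Set.univ) ∧
    ∀ t, 0 < t → ∀ x, partialT v t x + v t x * partialX v t x
      + lam * t ^ (ρ - 1) * partialXX v t x + ε * t ^ ρ * partialXXT v t x
      = δ * t ^ ((ρ - 4) / 2) := by
  obtain rfl : v = rescale (Real.exp (-2 * s)) (Real.exp (-ρ * s)) (Real.exp ((ρ - 2) * s)) u :=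
    funext fun t => funext (hv t)
  have hCB : Real.exp ((ρ - 2) * s) * Real.exp (-ρ * s) = Real.exp (-2 * s) := by
    rw [← Real.exp_add]; ring_nf
  have hB : Real.exp (-ρ * s) ^ 2 = Real.exp (-2 * s) ^ ρ := by
    rw [← Real.exp_mul, ← Real.exp_nat_mul]; ring_nf
  have hC : Real.exp ((ρ - 2) * s) * Real.exp (-2 * s) ^ ((ρ - 2) / 2) = 1 := by
    rw [← Real.exp_mul, ← Real.exp_add, Real.exp_eq_one_iff]; ring
  exact ⟨contDiffOn_rescale hu (Real.exp_pos _),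
    IsSolution.rescale hsol (Real.exp_pos _) hCB hB hC⟩

/-- the one-parameter Lie symmetry group
`(t,x,u) ↦ (e^{2s}t, e^{ρs}x, e^{(ρ-2)s}u)` of the equation
`u_t + u u_x + λ t^{ρ-1} u_xx + ε t^ρ u_xxt = δ t^{(ρ-4)/2}` (for `t > 0`)
maps solutions to solutions. -/
theorem stmt_4 (ε lam δ ρ s : ℝ) (hεlam : ε * lam ≠ 0)
    (u : ℝ → ℝ → ℝ)
    (hu : ContDiffOn ℝ (⊤ : ℕ∞) (fun p : ℝ × ℝ => u p.1 p.2) (Set.Ioi 0 ×ˢ Set.univ))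
    (hsol : ∀ t, 0 < t → ∀ x, partialT u t x + u t x * partialX u t x
      + lam * t ^ (ρ - 1) * partialXX u t x + ε * t ^ ρ * partialXXT u t x
      = δ * t ^ ((ρ - 4) / 2))
    (v : ℝ → ℝ → ℝ)
    (hv : ∀ t x, v t x
      = Real.exp ((ρ - 2) * s) * u (Real.exp (-2 * s) * t) (Real.exp (-ρ * s) * x)) :
    ContDiffOn ℝ (⊤ : ℕ∞) (fun p : ℝ × ℝ => v p.1 p.2) (Set.Ioi 0 ×ˢ Set.univ) ∧
    ∀ t, 0 < t → ∀ x, partialT v t x + v t x * partialX v t x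
      + lam * t ^ (ρ - 1) * partialXX v t x + ε * t ^ ρ * partialXXT v t x
      = δ * t ^ ((ρ - 4) / 2) :=
  stmt_4_general ε lam δ ρ s u hu hsol v hv
end

section
/- Let ε, λ, δ be real constants with ελ ≠ 0, and let s be any real number. If u : {t > 0} × ℝ → ℝ is a smooth solution of u_t + δ(ln t)u_x + u u_x + λ t u_{xx} + ε t² u_{xxt} = 0 for t > 0, then the function v(t,x) = u(e^{−s}t, e^{−s}x) − δs is also a smooth solution of the same equation for t > 0. -/
/-!
Under the dilation `(t, x) ↦ (c t, c x)` each term of the equation picks up exactly one factor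
of `c`: `u_t`, `u u_x`, `t u_xx` and `t² u_xxt` by the chain rule, while `(ln t) u_x` leaves the
extra term `-(ln c) u_x`, which is absorbed by adding `δ ln c` to `u` in the product `u u_x`.
With `c = e^{-s}` this is the shift `u ↦ u - δ s`. The dilation formulas for the partial
derivatives need no regularity, since `deriv (f (c * ·)) = c * deriv f (c * ·)` holds for
every `f`, differentiable or not.
-/

open Real

noncomputable def bbmbOperator (ε lam δ : ℝ) (u : ℝ → ℝ → ℝ) (t x : ℝ) : ℝ :=
  partialT u t x + δ * log t * partialX u t x + u t x * partialX u t x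
    + lam * t * partialXX u t x + ε * t ^ 2 * partialXXT u t x

section Dilation

variable (u : ℝ → ℝ → ℝ) (c k t x : ℝ)

theorem partialT_dilate :
    partialT (fun t x => u (c * t) (c * x) + k) t x = c * partialT u (c * t) (c * x) := by
  simp only [partialT, deriv_add_const]
  exact deriv_comp_mul_left c (fun τ => u τ (c * x)) t

theorem partialX_dilate :
    partialX (fun t x => u (c * t) (c * x) + k) t x = c * partialX u (c * t) (c * x) := by
  simp only [partialX, deriv_add_const]
  exact deriv_comp_mul_left c (fun y => u (c * t) y) x

theorem partialXX_dilate :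
    partialXX (fun t x => u (c * t) (c * x) + k) t x = c ^ 2 * partialXX u (c * t) (c * x) := by
  simp only [partialXX, partialX_dilate, deriv_const_mul_field]
  rw [deriv_comp_mul_left c (fun y => partialX u (c * t) y) x, smul_eq_mul, sq, mul_assoc]

theorem partialXXT_dilate :
    partialXXT (fun t x => u (c * t) (c * x) + k) t x
      = c ^ 3 * partialXXT u (c * t) (c * x) := by
  simp only [partialXXT, partialXX_dilate, deriv_const_mul_field]
  rw [deriv_comp_mul_left c (fun τ => partialXX u τ (c * x)) t, smul_eq_mul]
  ring

end Dilation

theorem bbmbOperator_dilate (ε lam δ : ℝ) (u : ℝ → ℝ → ℝ) {c t : ℝ} (hc : 0 < c) (ht : 0 < t)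
    (x : ℝ) :
    bbmbOperator ε lam δ (fun t x => u (c * t) (c * x) + δ * log c) t x
      = c * bbmbOperator ε lam δ u (c * t) (c * x) := by
  simp only [bbmbOperator, partialT_dilate, partialX_dilate, partialXX_dilate,
    partialXXT_dilate, log_mul hc.ne' ht.ne']
  ring

theorem contDiffOn_dilate {n : WithTop ℕ∞} {u : ℝ → ℝ → ℝ}
    (hu : ContDiffOn ℝ n (fun p : ℝ × ℝ => u p.1 p.2) (Set.Ioi 0 ×ˢ Set.univ))
    {c : ℝ} (hc : 0 < c) (k : ℝ) :
    ContDiffOn ℝ n (fun p : ℝ × ℝ => u (c * p.1) (c * p.2) + k) (Set.Ioi 0 ×ˢ Set.univ) := by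
  have hmaps : Set.MapsTo (fun p : ℝ × ℝ => c • p) (Set.Ioi 0 ×ˢ Set.univ)
      (Set.Ioi 0 ×ˢ Set.univ) :=
    fun p hp => ⟨mul_pos hc hp.1, Set.mem_univ _⟩
  exact (hu.comp (contDiff_const_smul c).contDiffOn hmaps).add contDiffOn_const

theorem stmt_6_general (ε lam δ s : ℝ)
    (u : ℝ → ℝ → ℝ)
    (hu : ContDiffOn ℝ (⊤ : ℕ∞) (fun p : ℝ × ℝ => u p.1 p.2) (Set.Ioi 0 ×ˢ Set.univ))
    (hsol : ∀ t, 0 < t → ∀ x, partialT u t x + δ * Real.log t * partialX u t x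
      + u t x * partialX u t x + lam * t * partialXX u t x
      + ε * t ^ 2 * partialXXT u t x = 0)
    (v : ℝ → ℝ → ℝ)
    (hv : ∀ t x, v t x = u (Real.exp (-s) * t) (Real.exp (-s) * x) - δ * s) :
    ContDiffOn ℝ (⊤ : ℕ∞) (fun p : ℝ × ℝ => v p.1 p.2) (Set.Ioi 0 ×ˢ Set.univ) ∧
    ∀ t, 0 < t → ∀ x, partialT v t x + δ * Real.log t * partialX v t x
      + v t x * partialX v t x + lam * t * partialXX v t x
      + ε * t ^ 2 * partialXXT v t x = 0 := by
  have hc : 0 < exp (-s) := exp_pos _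
  have hv' : v = fun t x => u (exp (-s) * t) (exp (-s) * x) + δ * log (exp (-s)) := by
    ext t x
    rw [hv, log_exp]
    ring
  subst hv'
  refine ⟨contDiffOn_dilate hu hc _, fun t ht x => ?_⟩
  have h := bbmbOperator_dilate ε lam δ u hc ht x
  rw [bbmbOperator, bbmbOperator, hsol _ (mul_pos hc ht), mul_zero] at h
  exact h

/-- the one-parameter Lie symmetry group
`(t,x,u) ↦ (e^{s}t, e^{s}x, u - δs)` of the equation
`u_t + δ(ln t)u_x + u u_x + λ t u_xx + ε t² u_xxt = 0` (for `t > 0`)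
maps solutions to solutions. -/
theorem stmt_6 (ε lam δ s : ℝ) (hεlam : ε * lam ≠ 0)
    (u : ℝ → ℝ → ℝ)
    (hu : ContDiffOn ℝ (⊤ : ℕ∞) (fun p : ℝ × ℝ => u p.1 p.2) (Set.Ioi 0 ×ˢ Set.univ))
    (hsol : ∀ t, 0 < t → ∀ x, partialT u t x + δ * Real.log t * partialX u t x
      + u t x * partialX u t x + lam * t * partialXX u t x
      + ε * t ^ 2 * partialXXT u t x = 0)
    (v : ℝ → ℝ → ℝ)
    (hv : ∀ t x, v t x = u (Real.exp (-s) * t) (Real.exp (-s) * x) - δ * s) :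
    ContDiffOn ℝ (⊤ : ℕ∞) (fun p : ℝ × ℝ => v p.1 p.2) (Set.Ioi 0 ×ˢ Set.univ) ∧
    ∀ t, 0 < t → ∀ x, partialT v t x + δ * Real.log t * partialX v t x
      + v t x * partialX v t x + lam * t * partialXX v t x
      + ε * t ^ 2 * partialXXT v t x = 0 :=
  stmt_6_general ε lam δ s u hu hsol v hv
end

section
/- Let ε, λ, δ be real constants with ελ ≠ 0, and let s be any real number. If u : ℝ × ℝ → ℝ is a smooth solution of u_t + δt·u_x + u u_x + λ u_{xx} + ε u_{xxt} = 0, then the function v(t,x) = u(t − s, x) − δs is also a smooth solution of the same equation. -/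
/-! The equation is autonomous in `u` except for the term `δ t u_x`, and the coefficient drift
`δ (t - s) = δ t - δ s` it causes under a time shift is exactly absorbed by shifting `u` by `-δ s`
in the nonlinear term `u u_x`. All partial derivatives simply commute with the map
`u ↦ u(· - s, ·) - c`, with no smoothness needed. -/

section TimeShift

variable (w : ℝ → ℝ → ℝ) (s c t x : ℝ)

theorem partialX_timeShift :
    partialX (fun t x => w (t - s) x - c) t x = partialX w (t - s) x :=
  deriv_sub_const c

theorem partialXX_timeShift :
    partialXX (fun t x => w (t - s) x - c) t x = partialXX w (t - s) x := by
  simp only [partialXX, partialX_timeShift]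

theorem partialT_timeShift :
    partialT (fun t x => w (t - s) x - c) t x = partialT w (t - s) x := by
  simp only [partialT, deriv_sub_const]
  exact deriv_comp_sub_const (fun r => w r x) s t

theorem partialXXT_timeShift :
    partialXXT (fun t x => w (t - s) x - c) t x = partialXXT w (t - s) x := by
  simp only [partialXXT, partialXX_timeShift]
  exact deriv_comp_sub_const (fun r => partialXX w r x) s t

theorem contDiff_timeShift {n : WithTop ℕ∞} (hw : ContDiff ℝ n (fun p : ℝ × ℝ => w p.1 p.2)) :
    ContDiff ℝ n (fun p : ℝ × ℝ => w (p.1 - s) p.2 - c) :=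
  (hw.comp ((contDiff_fst.sub contDiff_const).prodMk contDiff_snd)).sub contDiff_const

end TimeShift

theorem stmt_7_general (ε lam δ s : ℝ)
    (u : ℝ → ℝ → ℝ)
    (hu : ContDiff ℝ (⊤ : ℕ∞) (fun p : ℝ × ℝ => u p.1 p.2))
    (hsol : ∀ t x, partialT u t x + δ * t * partialX u t x
      + u t x * partialX u t x + lam * partialXX u t x + ε * partialXXT u t x = 0)
    (v : ℝ → ℝ → ℝ)
    (hv : ∀ t x, v t x = u (t - s) x - δ * s) :
    ContDiff ℝ (⊤ : ℕ∞) (fun p : ℝ × ℝ => v p.1 p.2) ∧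
    ∀ t x, partialT v t x + δ * t * partialX v t x
      + v t x * partialX v t x + lam * partialXX v t x + ε * partialXXT v t x = 0 := by
  obtain rfl : v = fun t x => u (t - s) x - δ * s := funext₂ hv
  refine ⟨contDiff_timeShift u s _ hu, fun t x => ?_⟩
  rw [partialT_timeShift, partialX_timeShift, partialXX_timeShift, partialXXT_timeShift]
  linear_combination hsol (t - s) x

/-- the one-parameter Lie symmetry group
`(t,x,u) ↦ (t + s, x, u - δs)` of the equation
`u_t + δt u_x + u u_x + λ u_xx + ε u_xxt = 0` maps solutions to solutions. -/
theorem stmt_7 (ε lam δ s : ℝ) (hεlam : ε * lam ≠ 0)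
    (u : ℝ → ℝ → ℝ)
    (hu : ContDiff ℝ (⊤ : ℕ∞) (fun p : ℝ × ℝ => u p.1 p.2))
    (hsol : ∀ t x, partialT u t x + δ * t * partialX u t x
      + u t x * partialX u t x + lam * partialXX u t x + ε * partialXXT u t x = 0)
    (v : ℝ → ℝ → ℝ)
    (hv : ∀ t x, v t x = u (t - s) x - δ * s) :
    ContDiff ℝ (⊤ : ℕ∞) (fun p : ℝ × ℝ => v p.1 p.2) ∧
    ∀ t x, partialT v t x + δ * t * partialX v t x
      + v t x * partialX v t x + lam * partialXX v t x + ε * partialXXT v t x = 0 :=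
  stmt_7_general ε lam δ s u hu hsol v hv
end

section
/- Let ε, λ, δ, ρ be real constants with ελρ ≠ 0, and let φ : ℝ → ℝ be a smooth solution of the ODE ερ ω φ''' + (ε(ρ+2) − 2λ)φ'' − 2φφ' + ρωφ' + (2−ρ)φ + 2δ = 0 (in the variable ω). Then the function u(t,x) = t^{ρ/2 − 1} φ(x t^{−ρ/2}) is a smooth solution of u_t + u u_x + λ t^{ρ−1} u_{xx} + ε t^{ρ} u_{xxt} = δ t^{(ρ−4)/2} on the domain t > 0. -/
open Set

noncomputable def selfSimilar (a b : ℝ) (φ : ℝ → ℝ) (t x : ℝ) : ℝ := t ^ a * φ (x * t ^ b)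

section SelfSimilar

variable {a b t : ℝ} {φ : ℝ → ℝ}

theorem contDiffOn_selfSimilar {n : WithTop ℕ∞} (hφ : ContDiff ℝ n φ) :
    ContDiffOn ℝ n (fun p : ℝ × ℝ => selfSimilar a b φ p.1 p.2) (Ioi 0 ×ˢ univ) := by
  rintro p ⟨hp : 0 < p.1, -⟩
  have hpow : ∀ c : ℝ, ContDiffAt ℝ n (fun q : ℝ × ℝ => q.1 ^ c) p := fun c =>
    (Real.contDiffAt_rpow_const_of_ne hp.ne').comp p contDiffAt_fst
  exact ((hpow a).mul (hφ.contDiffAt.comp p (contDiffAt_snd.mul (hpow b)))).contDiffWithinAt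

theorem hasDerivAt_selfSimilar_x (hφ : Differentiable ℝ φ) (ht : 0 < t) (x : ℝ) :
    HasDerivAt (selfSimilar a b φ t) (selfSimilar (a + b) b (deriv φ) t x) x := by
  have hω : HasDerivAt (fun y : ℝ => y * t ^ b) (t ^ b) x := by
    simpa using (hasDerivAt_id x).mul_const (t ^ b)
  refine (((hφ _).hasDerivAt.comp x hω).const_mul (t ^ a)).congr_deriv ?_
  simp only [selfSimilar, Real.rpow_add ht]
  ring

theorem partialX_selfSimilar (hφ : Differentiable ℝ φ) (ht : 0 < t) :
    partialX (selfSimilar a b φ) t = selfSimilar (a + b) b (deriv φ) t :=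
  funext fun x => (hasDerivAt_selfSimilar_x hφ ht x).deriv

theorem partialXX_selfSimilar (hφ : Differentiable ℝ φ) (hφ' : Differentiable ℝ (deriv φ))
    (ht : 0 < t) :
    partialXX (selfSimilar a b φ) t = selfSimilar (a + b + b) b (deriv (deriv φ)) t := by
  funext x
  rw [partialXX, partialX_selfSimilar hφ ht]
  exact (hasDerivAt_selfSimilar_x hφ' ht x).deriv

theorem hasDerivAt_selfSimilar_t (hφ : Differentiable ℝ φ) (ht : 0 < t) (x : ℝ) :
    HasDerivAt (fun s => selfSimilar a b φ s x)
      (selfSimilar (a - 1) b (fun ω => a * φ ω + b * ω * deriv φ ω) t x) t := by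
  have hω : HasDerivAt (fun s : ℝ => x * s ^ b) (x * (b * t ^ (b - 1))) t :=
    (Real.hasDerivAt_rpow_const (Or.inl ht.ne')).const_mul x
  have hpow : HasDerivAt (fun s : ℝ => s ^ a) (a * t ^ (a - 1)) t :=
    Real.hasDerivAt_rpow_const (Or.inl ht.ne')
  refine (hpow.mul ((hφ _).hasDerivAt.comp t hω)).congr_deriv ?_
  simp only [selfSimilar, Function.comp_apply, Real.rpow_sub_one ht.ne']
  field_simp

theorem partialT_selfSimilar (hφ : Differentiable ℝ φ) (ht : 0 < t) (x : ℝ) :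
    partialT (selfSimilar a b φ) t x =
      selfSimilar (a - 1) b (fun ω => a * φ ω + b * ω * deriv φ ω) t x :=
  (hasDerivAt_selfSimilar_t hφ ht x).deriv

theorem partialXXT_selfSimilar (hφ : Differentiable ℝ φ) (hφ' : Differentiable ℝ (deriv φ))
    (hφ'' : Differentiable ℝ (deriv (deriv φ))) (ht : 0 < t) (x : ℝ) :
    partialXXT (selfSimilar a b φ) t x =
      selfSimilar (a + b + b - 1) b
        (fun ω => (a + b + b) * deriv (deriv φ) ω + b * ω * deriv (deriv (deriv φ)) ω) t x := by
  have hXX : (fun s => partialXX (selfSimilar a b φ) s x) =ᶠ[nhds t]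
      fun s => selfSimilar (a + b + b) b (deriv (deriv φ)) s x := by
    filter_upwards [Ioi_mem_nhds ht] with s hs
    rw [partialXX_selfSimilar hφ hφ' hs]
  rw [partialXXT, hXX.deriv_eq]
  exact partialT_selfSimilar hφ'' ht x

end SelfSimilar

theorem stmt_8_general (ε lam δ ρ : ℝ)
    (φ : ℝ → ℝ) (hφ : ContDiff ℝ (⊤ : ℕ∞) φ)
    (hode : ∀ ω, ε * ρ * ω * iteratedDeriv 3 φ ω
      + (ε * (ρ + 2) - 2 * lam) * iteratedDeriv 2 φ ω
      - 2 * φ ω * deriv φ ω + ρ * ω * deriv φ ω + (2 - ρ) * φ ω + 2 * δ = 0)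
    (u : ℝ → ℝ → ℝ)
    (hu : ∀ t x, u t x = t ^ (ρ / 2 - 1) * φ (x * t ^ (-ρ / 2))) :
    ContDiffOn ℝ (⊤ : ℕ∞) (fun p : ℝ × ℝ => u p.1 p.2) (Set.Ioi 0 ×ˢ Set.univ) ∧
    ∀ t, 0 < t → ∀ x, partialT u t x + u t x * partialX u t x
      + lam * t ^ (ρ - 1) * partialXX u t x + ε * t ^ ρ * partialXXT u t x
      = δ * t ^ ((ρ - 4) / 2) := by
  obtain rfl : u = selfSimilar (ρ / 2 - 1) (-ρ / 2) φ := funext fun t => funext (hu t)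
  refine ⟨contDiffOn_selfSimilar hφ, fun t ht x => ?_⟩
  obtain ⟨hd, hφ'⟩ := contDiff_infty_iff_deriv.mp hφ
  obtain ⟨hd', hφ''⟩ := contDiff_infty_iff_deriv.mp hφ'
  have hd'' : Differentiable ℝ (deriv (deriv φ)) := hφ''.differentiable (by simp)
  rw [partialT_selfSimilar hd ht, partialX_selfSimilar hd ht, partialXX_selfSimilar hd hd' ht,
    partialXXT_selfSimilar hd hd' hd'' ht]
  set ω := x * t ^ (-ρ / 2)
  have hω := hode ω
  simp only [iteratedDeriv_eq_iterate, Function.iterate_succ_apply', Function.iterate_zero_apply]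
    at hω
  simp only [selfSimilar]
  have hpow : ∀ c d : ℝ, c + d = ρ / 2 - 2 → t ^ c * t ^ d = t ^ (ρ / 2 - 2) := fun c d h => by
    rw [← Real.rpow_add ht, h]
  rw [show ρ / 2 - 1 - 1 = ρ / 2 - 2 by ring, show (ρ - 4) / 2 = ρ / 2 - 2 by ring]
  linear_combination (-t ^ (ρ / 2 - 2) / 2) * hω
    + φ ω * deriv φ ω * hpow (ρ / 2 - 1) (ρ / 2 - 1 + -ρ / 2) (by ring)
    + lam * deriv (deriv φ) ω * hpow (ρ - 1) (ρ / 2 - 1 + -ρ / 2 + -ρ / 2) (by ring)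
    + ε * ((ρ / 2 - 1 + -ρ / 2 + -ρ / 2) * deriv (deriv φ) ω
      + -ρ / 2 * ω * deriv (deriv (deriv φ)) ω)
      * hpow ρ (ρ / 2 - 1 + -ρ / 2 + -ρ / 2 - 1) (by ring)

/-- the ansatz `u = t^{ρ/2-1} φ(x t^{-ρ/2})` turns any smooth solution of
the reduced ODE `ερω φ''' + (ε(ρ+2) - 2λ)φ'' - 2φφ' + ρωφ' + (2-ρ)φ + 2δ = 0` into a
smooth solution of `u_t + u u_x + λ t^{ρ-1} u_xx + ε t^ρ u_xxt = δ t^{(ρ-4)/2}` on `t > 0`. -/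
theorem stmt_8 (ε lam δ ρ : ℝ) (h : ε * lam * ρ ≠ 0)
    (φ : ℝ → ℝ) (hφ : ContDiff ℝ (⊤ : ℕ∞) φ)
    (hode : ∀ ω, ε * ρ * ω * iteratedDeriv 3 φ ω
      + (ε * (ρ + 2) - 2 * lam) * iteratedDeriv 2 φ ω
      - 2 * φ ω * deriv φ ω + ρ * ω * deriv φ ω + (2 - ρ) * φ ω + 2 * δ = 0)
    (u : ℝ → ℝ → ℝ)
    (hu : ∀ t x, u t x = t ^ (ρ / 2 - 1) * φ (x * t ^ (-ρ / 2))) :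
    ContDiffOn ℝ (⊤ : ℕ∞) (fun p : ℝ × ℝ => u p.1 p.2) (Set.Ioi 0 ×ˢ Set.univ) ∧
    ∀ t, 0 < t → ∀ x, partialT u t x + u t x * partialX u t x
      + lam * t ^ (ρ - 1) * partialXX u t x + ε * t ^ ρ * partialXXT u t x
      = δ * t ^ ((ρ - 4) / 2) :=
  stmt_8_general ε lam δ ρ φ hφ hode u hu
end

section
/- Let ε, λ, δ, α be real constants with ελ ≠ 0, and let φ : ℝ → ℝ be a smooth solution of the ODE εα φ''' + (ε − λ)φ'' − φφ' + αφ' + φ + δ = 0 (in the variable ω). Then the function u(t,x) = (1/t)·φ(x − α ln t) is a smooth solution of u_t + u u_x + λ t^{−1} u_{xx} + ε u_{xxt} = δ t^{−2} on the domain t > 0. -/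
/-!
The ansatz `u t x = a t * f (x - b t)` is closed under differentiation: `∂ₓ` replaces `f` by `f'`,
and `∂ₜ` produces `a' f - a b' f'`. With `a t = 1/t` and `b t = α log t` every term of the PDE is
therefore `t⁻²` times an expression in `φ(ω)` and its derivatives, and that expression is the
left-hand side of the reduced ODE.
-/

section Ansatz

variable {a b f : ℝ → ℝ}

theorem contDiffOn_mul_comp_sub {n : WithTop ℕ∞} {s : Set ℝ} (ha : ContDiffOn ℝ n a s)
    (hb : ContDiffOn ℝ n b s) (hf : ContDiff ℝ n f) :
    ContDiffOn ℝ n (fun p : ℝ × ℝ => a p.1 * f (p.2 - b p.1)) (s ×ˢ Set.univ) :=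
  (ha.comp contDiffOn_fst fun _ hp => hp.1).mul <|
    hf.comp_contDiffOn <| contDiffOn_snd.sub (hb.comp contDiffOn_fst fun _ hp => hp.1)

theorem partialX_mul_comp_sub (hf : Differentiable ℝ f) (t x : ℝ) :
    partialX (fun t x => a t * f (x - b t)) t x = a t * deriv f (x - b t) := by
  have hcomp : HasDerivAt (fun y => f (y - b t)) (deriv f (x - b t)) x := by
    simpa using (hf (x - b t)).hasDerivAt.comp_sub_const x (b t)
  exact (hcomp.const_mul (a t)).deriv

theorem partialX_mul_comp_sub_iteratedDeriv {N : WithTop ℕ∞} {n : ℕ} (hf : ContDiff ℝ N f)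
    (hn : n < N) :
    partialX (fun t x => a t * iteratedDeriv n f (x - b t))
      = fun t x => a t * iteratedDeriv (n + 1) f (x - b t) := by
  ext t x
  rw [partialX_mul_comp_sub (hf.differentiable_iteratedDeriv n hn), iteratedDeriv_succ]

theorem partialT_mul_comp_sub {t : ℝ} (x : ℝ) (ha : DifferentiableAt ℝ a t)
    (hb : DifferentiableAt ℝ b t) (hf : DifferentiableAt ℝ f (x - b t)) :
    partialT (fun t x => a t * f (x - b t)) t x
      = deriv a t * f (x - b t) - a t * deriv b t * deriv f (x - b t) := by
  have hcomp : HasDerivAt (fun s => f (x - b s)) (deriv f (x - b t) * -deriv b t) t :=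
    hf.hasDerivAt.comp t (hb.hasDerivAt.const_sub x)
  exact (ha.hasDerivAt.mul hcomp).deriv.trans (by ring)

end Ansatz

section LogAnsatz

variable {α : ℝ} {g : ℝ → ℝ}

theorem contDiffOn_inv_mul_comp_sub_log {n : WithTop ℕ∞} (hg : ContDiff ℝ n g) :
    ContDiffOn ℝ n (fun p : ℝ × ℝ => 1 / p.1 * g (p.2 - α * Real.log p.1))
      (Set.Ioi 0 ×ˢ Set.univ) :=
  contDiffOn_mul_comp_sub (contDiffOn_const.div contDiffOn_id fun _ ht => ht.ne')
    (contDiffOn_const.mul (Real.contDiffOn_log.mono fun _ ht => ht.ne')) hg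

theorem partialT_inv_mul_comp_sub_log {t : ℝ} (ht : 0 < t) (x : ℝ)
    (hg : DifferentiableAt ℝ g (x - α * Real.log t)) :
    partialT (fun t x => 1 / t * g (x - α * Real.log t)) t x
      = -(t ^ 2)⁻¹ * (g (x - α * Real.log t) + α * deriv g (x - α * Real.log t)) := by
  have hinv : HasDerivAt (fun t : ℝ => 1 / t) (-(t ^ 2)⁻¹) t := by
    simpa only [one_div] using hasDerivAt_inv ht.ne'
  have hlog : HasDerivAt (fun t => α * Real.log t) (α * t⁻¹) t :=
    (Real.hasDerivAt_log ht.ne').const_mul α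
  rw [partialT_mul_comp_sub x hinv.differentiableAt hlog.differentiableAt hg, hinv.deriv,
    hlog.deriv]
  field_simp
  ring

end LogAnsatz

theorem stmt_9_general (ε lam δ α : ℝ) (φ : ℝ → ℝ) (hφ : ContDiff ℝ (⊤ : ℕ∞) φ)
    (hode : ∀ ω, ε * α * iteratedDeriv 3 φ ω + (ε - lam) * iteratedDeriv 2 φ ω
      - φ ω * deriv φ ω + α * deriv φ ω + φ ω + δ = 0)
    (u : ℝ → ℝ → ℝ)
    (hu : ∀ t x, u t x = 1 / t * φ (x - α * Real.log t)) :
    ContDiffOn ℝ (⊤ : ℕ∞) (fun p : ℝ × ℝ => u p.1 p.2) (Set.Ioi 0 ×ˢ Set.univ) ∧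
    ∀ t, 0 < t → ∀ x, partialT u t x + u t x * partialX u t x
      + lam * t ^ (-1 : ℝ) * partialXX u t x + ε * partialXXT u t x
      = δ * t ^ (-2 : ℝ) := by
  have hu' : u = fun t x => 1 / t * iteratedDeriv 0 φ (x - α * Real.log t) := by
    ext t x
    rw [hu, iteratedDeriv_zero]
  have hsmooth (n : ℕ) : (n : WithTop ℕ∞) < (⊤ : ℕ∞) := by exact_mod_cast WithTop.coe_lt_top n
  have hX : partialX u = fun t x => 1 / t * iteratedDeriv 1 φ (x - α * Real.log t) := by
    rw [hu', partialX_mul_comp_sub_iteratedDeriv hφ (hsmooth 0)]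
  have hXX : partialXX u = fun t x => 1 / t * iteratedDeriv 2 φ (x - α * Real.log t) := by
    rw [show partialXX u = partialX (partialX u) from rfl, hX,
      partialX_mul_comp_sub_iteratedDeriv hφ (hsmooth 1)]
  refine ⟨hu' ▸ contDiffOn_inv_mul_comp_sub_log (by simpa using hφ), fun t ht x => ?_⟩
  have hT (n : ℕ) := partialT_inv_mul_comp_sub_log (α := α) ht x
    ((hφ.differentiable_iteratedDeriv n (hsmooth n)) _)
  have hXXT : partialXXT u t x = partialT (partialXX u) t x := rfl
  rw [hXXT, hXX, hT, hX, hu', hT, Real.rpow_neg_one,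
    show t ^ (-2 : ℝ) = (t ^ 2)⁻¹ by rw [Real.rpow_neg ht.le, Real.rpow_two]]
  simp only [iteratedDeriv_zero, iteratedDeriv_one, ← iteratedDeriv_succ]
  field_simp
  linear_combination -hode (x - α * Real.log t)

/-- the ansatz `u = (1/t) φ(x - α ln t)` turns any smooth solution of the
reduced ODE `εα φ''' + (ε - λ)φ'' - φφ' + αφ' + φ + δ = 0` into a smooth solution of
`u_t + u u_x + λ t⁻¹ u_xx + ε u_xxt = δ t⁻²` on `t > 0`. -/
theorem stmt_9 (ε lam δ α : ℝ) (h : ε * lam ≠ 0)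
    (φ : ℝ → ℝ) (hφ : ContDiff ℝ (⊤ : ℕ∞) φ)
    (hode : ∀ ω, ε * α * iteratedDeriv 3 φ ω + (ε - lam) * iteratedDeriv 2 φ ω
      - φ ω * deriv φ ω + α * deriv φ ω + φ ω + δ = 0)
    (u : ℝ → ℝ → ℝ)
    (hu : ∀ t x, u t x = 1 / t * φ (x - α * Real.log t)) :
    ContDiffOn ℝ (⊤ : ℕ∞) (fun p : ℝ × ℝ => u p.1 p.2) (Set.Ioi 0 ×ˢ Set.univ) ∧
    ∀ t, 0 < t → ∀ x, partialT u t x + u t x * partialX u t x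
      + lam * t ^ (-1 : ℝ) * partialXX u t x + ε * partialXXT u t x
      = δ * t ^ (-2 : ℝ) :=
  stmt_9_general ε lam δ α φ hφ hode u hu
end

section
/- Let ε, λ, δ be real constants with ελ ≠ 0, and let φ : ℝ → ℝ be a smooth solution of the ODE ε ω φ''' + (ε − 2λ)φ'' − 2φφ' + ωφ' − φ + 2δ = 0 (in the variable ω). Then the function u(t,x) = e^{t/2} φ(x e^{−t/2}) is a smooth solution of u_t + u u_x + λ e^{t} u_{xx} + ε e^{t} u_{xxt} = δ e^{t/2} on ℝ × ℝ. -/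
/-!
By the chain rule every partial derivative of `u` is `e^{±t/2}` times a polynomial in `φ` and its
derivatives at `ω = x e^{-t/2}`. After `e^t = (e^{t/2})²` and `e^{t/2} e^{-t/2} = 1`, the left side
of the PDE minus `δ e^{t/2}` is `-e^{t/2}/2` times the left side of the reduced ODE at `ω`.
-/

open Real

noncomputable def similarityAnsatz (φ : ℝ → ℝ) (t x : ℝ) : ℝ := exp (t / 2) * φ (x * exp (-t / 2))

theorem exp_half_mul_exp_neg_half (t : ℝ) : exp (t / 2) * exp (-t / 2) = 1 := by
  rw [← exp_add, neg_div, add_neg_cancel, exp_zero]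

section SimilarityAnsatz

variable {φ : ℝ → ℝ}

theorem contDiff_similarityAnsatz {n : WithTop ℕ∞} (hφ : ContDiff ℝ n φ) :
    ContDiff ℝ n fun p : ℝ × ℝ => similarityAnsatz φ p.1 p.2 :=
  (contDiff_exp.comp (contDiff_fst.div_const 2)).mul
    (hφ.comp (contDiff_snd.mul (contDiff_exp.comp (contDiff_fst.neg.div_const 2))))

theorem hasDerivAt_mul_comp_mul_exp_neg_half {f g : ℝ → ℝ} {f' t : ℝ} (hf : HasDerivAt f f' t)
    (hg : Differentiable ℝ g) (x : ℝ) :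
    HasDerivAt (fun s => f s * g (x * exp (-s / 2)))
      (f' * g (x * exp (-t / 2))
        - f t * (x * exp (-t / 2) / 2) * deriv g (x * exp (-t / 2))) t := by
  have hω : HasDerivAt (fun s => x * exp (-s / 2)) (x * (exp (-t / 2) * (-1 / 2))) t :=
    ((hasDerivAt_neg t).div_const 2).exp.const_mul x
  refine (hf.mul ((hg _).hasDerivAt.comp t hω)).congr_deriv ?_
  simp only [Function.comp_apply]
  ring

theorem partialX_similarityAnsatz (hφ : Differentiable ℝ φ) (t x : ℝ) :
    partialX (similarityAnsatz φ) t x = deriv φ (x * exp (-t / 2)) := by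
  have hder : HasDerivAt (similarityAnsatz φ t)
      (exp (t / 2) * (deriv φ (x * exp (-t / 2)) * exp (-t / 2))) x :=
    ((hφ _).hasDerivAt.comp x (hasDerivAt_mul_const _)).const_mul _
  rw [partialX, hder.deriv]
  linear_combination deriv φ (x * exp (-t / 2)) * exp_half_mul_exp_neg_half t

theorem partialXX_similarityAnsatz (hφ : ContDiff ℝ 2 φ) (t x : ℝ) :
    partialXX (similarityAnsatz φ) t x = exp (-t / 2) * iteratedDeriv 2 φ (x * exp (-t / 2)) := by
  have hφ' : Differentiable ℝ (deriv φ) := by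
    simpa only [iteratedDeriv_one] using hφ.differentiable_iteratedDeriv' 1
  have hder : HasDerivAt (fun y => deriv φ (y * exp (-t / 2)))
      (deriv (deriv φ) (x * exp (-t / 2)) * exp (-t / 2)) x :=
    (hφ' _).hasDerivAt.comp x (hasDerivAt_mul_const _)
  rw [partialXX, funext (partialX_similarityAnsatz (hφ.differentiable two_ne_zero) t), hder.deriv,
    iteratedDeriv_succ, iteratedDeriv_one, mul_comm]

theorem partialT_similarityAnsatz (hφ : Differentiable ℝ φ) (t x : ℝ) :
    partialT (similarityAnsatz φ) t x = exp (t / 2) / 2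
      * (φ (x * exp (-t / 2)) - x * exp (-t / 2) * deriv φ (x * exp (-t / 2))) := by
  have hder : HasDerivAt (fun s => similarityAnsatz φ s x) _ t :=
    hasDerivAt_mul_comp_mul_exp_neg_half ((hasDerivAt_id' t).div_const 2).exp hφ x
  rw [partialT, hder.deriv]
  ring

theorem partialXXT_similarityAnsatz (hφ : ContDiff ℝ 3 φ) (t x : ℝ) :
    partialXXT (similarityAnsatz φ) t x = -exp (-t / 2) / 2 * (iteratedDeriv 2 φ (x * exp (-t / 2))
      + x * exp (-t / 2) * iteratedDeriv 3 φ (x * exp (-t / 2))) := by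
  have hder : HasDerivAt (fun s => exp (-s / 2) * iteratedDeriv 2 φ (x * exp (-s / 2))) _ t :=
    hasDerivAt_mul_comp_mul_exp_neg_half ((hasDerivAt_neg t).div_const 2).exp
      (hφ.differentiable_iteratedDeriv' 2) x
  rw [partialXXT, funext fun s => partialXX_similarityAnsatz (hφ.of_le (by norm_num)) s x,
    hder.deriv, ← iteratedDeriv_succ]
  ring

end SimilarityAnsatz

theorem stmt_10_general (ε lam δ : ℝ)
    (φ : ℝ → ℝ) (hφ : ContDiff ℝ (⊤ : ℕ∞) φ)
    (hode : ∀ ω, ε * ω * iteratedDeriv 3 φ ω + (ε - 2 * lam) * iteratedDeriv 2 φ ω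
      - 2 * φ ω * deriv φ ω + ω * deriv φ ω - φ ω + 2 * δ = 0)
    (u : ℝ → ℝ → ℝ)
    (hu : ∀ t x, u t x = Real.exp (t / 2) * φ (x * Real.exp (-t / 2))) :
    ContDiff ℝ (⊤ : ℕ∞) (fun p : ℝ × ℝ => u p.1 p.2) ∧
    ∀ t x, partialT u t x + u t x * partialX u t x
      + lam * Real.exp t * partialXX u t x + ε * Real.exp t * partialXXT u t x
      = δ * Real.exp (t / 2) := by
  obtain rfl : u = similarityAnsatz φ := funext fun t => funext (hu t)
  have hφ3 : ContDiff ℝ 3 φ := hφ.of_le (WithTop.coe_le_coe.mpr le_top)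
  refine ⟨contDiff_similarityAnsatz hφ, fun t x => ?_⟩
  rw [partialT_similarityAnsatz (hφ3.differentiable (by norm_num)), similarityAnsatz,
    partialX_similarityAnsatz (hφ3.differentiable (by norm_num)),
    partialXX_similarityAnsatz (hφ3.of_le (by norm_num)), partialXXT_similarityAnsatz hφ3]
  have hexp : exp t = exp (t / 2) * exp (t / 2) := by rw [← exp_add, add_halves]
  set ω := x * exp (-t / 2)
  linear_combination (-exp (t / 2) / 2) * hode ω
    + (lam * iteratedDeriv 2 φ ω - ε / 2 * (iteratedDeriv 2 φ ω + ω * iteratedDeriv 3 φ ω))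
      * (exp (-t / 2) * hexp + exp (t / 2) * exp_half_mul_exp_neg_half t)

/-- the ansatz `u = e^{t/2} φ(x e^{-t/2})` turns any smooth solution of
the reduced ODE `εω φ''' + (ε - 2λ)φ'' - 2φφ' + ωφ' - φ + 2δ = 0` into a smooth
solution of `u_t + u u_x + λ e^t u_xx + ε e^t u_xxt = δ e^{t/2}` on `ℝ × ℝ`. -/
theorem stmt_10 (ε lam δ : ℝ) (h : ε * lam ≠ 0)
    (φ : ℝ → ℝ) (hφ : ContDiff ℝ (⊤ : ℕ∞) φ)
    (hode : ∀ ω, ε * ω * iteratedDeriv 3 φ ω + (ε - 2 * lam) * iteratedDeriv 2 φ ω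
      - 2 * φ ω * deriv φ ω + ω * deriv φ ω - φ ω + 2 * δ = 0)
    (u : ℝ → ℝ → ℝ)
    (hu : ∀ t x, u t x = Real.exp (t / 2) * φ (x * Real.exp (-t / 2))) :
    ContDiff ℝ (⊤ : ℕ∞) (fun p : ℝ × ℝ => u p.1 p.2) ∧
    ∀ t x, partialT u t x + u t x * partialX u t x
      + lam * Real.exp t * partialXX u t x + ε * Real.exp t * partialXXT u t x
      = δ * Real.exp (t / 2) :=
  stmt_10_general ε lam δ φ hφ hode u hu
end

section
/- Let ε, λ, δ, ρ be real constants with ρ ≠ 0. Then the function u(t,x) = x/t + (2δ/ρ)·t^{ρ/2 − 1} is a smooth solution of u_t + u u_x + λ t^{ρ−1} u_{xx} + ε t^{ρ} u_{xxt} = δ t^{(ρ−4)/2} on the domain t > 0. -/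
section AffineInSpace

variable {v : ℝ → ℝ → ℝ} {a b : ℝ → ℝ}

theorem partialX_of_affine (hv : ∀ t x, v t x = a t * x + b t) (t x : ℝ) :
    partialX v t x = a t := by
  have hline : HasDerivAt (fun y => a t * y + b t) (a t) x := by
    simpa using ((hasDerivAt_id x).const_mul (a t)).add_const (b t)
  simpa only [partialX, hv] using hline.deriv

theorem partialXX_of_affine (hv : ∀ t x, v t x = a t * x + b t) (t x : ℝ) :
    partialXX v t x = 0 := by
  simp only [partialXX, partialX_of_affine hv, deriv_const]

theorem partialXXT_of_affine (hv : ∀ t x, v t x = a t * x + b t) (t x : ℝ) :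
    partialXXT v t x = 0 := by
  simp only [partialXXT, partialXX_of_affine hv, deriv_const]

end AffineInSpace

theorem hasDerivAt_div_add_mul_rpow (x c r : ℝ) {t : ℝ} (ht : t ≠ 0) :
    HasDerivAt (fun s => x / s + c * s ^ r) (-x / t ^ 2 + c * (r * t ^ (r - 1))) t := by
  have hdiv : HasDerivAt (fun s => x / s) (-x / t ^ 2) t := by
    simpa [div_eq_mul_inv, neg_div] using (hasDerivAt_inv ht).const_mul x
  exact hdiv.add ((Real.hasDerivAt_rpow_const (Or.inl ht)).const_mul c)

theorem contDiffOn_div_add_mul_rpow (c r : ℝ) :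
    ContDiffOn ℝ (⊤ : ℕ∞) (fun p : ℝ × ℝ => p.2 / p.1 + c * p.1 ^ r) (Set.Ioi 0 ×ˢ Set.univ) := by
  have hrpow : ContDiffOn ℝ (⊤ : ℕ∞) (fun s : ℝ => s ^ r) (Set.Ioi 0) :=
    fun s hs => (Real.contDiffAt_rpow_const_of_ne (ne_of_gt hs)).contDiffWithinAt
  exact (contDiff_snd.contDiffOn.div contDiff_fst.contDiffOn fun p hp => ne_of_gt hp.1).add
    (contDiffOn_const.mul (hrpow.comp contDiff_fst.contDiffOn fun p hp => hp.1))

theorem deriv_div_add_mul_rpow_add_mul_inv (x c r : ℝ) {t : ℝ} (ht : 0 < t) :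
    deriv (fun s => x / s + c * s ^ r) t + (x / t + c * t ^ r) * t⁻¹
      = c * (r + 1) * t ^ (r - 1) := by
  have hpow : t ^ r = t ^ (r - 1) * t := by
    rw [← Real.rpow_add_one ht.ne', sub_add_cancel]
  rw [(hasDerivAt_div_add_mul_rpow x c r ht.ne').deriv, hpow]
  field_simp
  ring

/-- `u(t,x) = x/t + (2δ/ρ) t^{ρ/2-1}` is a "degenerate" exact solution of
`u_t + u u_x + λ t^{ρ-1} u_xx + ε t^ρ u_xxt = δ t^{(ρ-4)/2}` on the domain `t > 0`. -/
theorem stmt_13 (ε lam δ ρ : ℝ) (hρ : ρ ≠ 0)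
    (u : ℝ → ℝ → ℝ)
    (hu : ∀ t x, u t x = x / t + 2 * δ / ρ * t ^ (ρ / 2 - 1)) :
    ContDiffOn ℝ (⊤ : ℕ∞) (fun p : ℝ × ℝ => u p.1 p.2) (Set.Ioi 0 ×ˢ Set.univ) ∧
    ∀ t, 0 < t → ∀ x, partialT u t x + u t x * partialX u t x
      + lam * t ^ (ρ - 1) * partialXX u t x + ε * t ^ ρ * partialXXT u t x
      = δ * t ^ ((ρ - 4) / 2) := by
  have haffine : ∀ t x, u t x = t⁻¹ * x + 2 * δ / ρ * t ^ (ρ / 2 - 1) := fun t x => by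
    rw [hu, div_eq_inv_mul]
  refine ⟨?_, fun t ht x => ?_⟩
  · simpa only [hu] using contDiffOn_div_add_mul_rpow (2 * δ / ρ) (ρ / 2 - 1)
  · have hexp : ρ / 2 - 1 - 1 = (ρ - 4) / 2 := by ring
    have hcoeff : 2 * δ / ρ * (ρ / 2 - 1 + 1) = δ := by field_simp; ring
    simp only [partialT, hu, partialX_of_affine haffine, partialXX_of_affine haffine,
      partialXXT_of_affine haffine, mul_zero, add_zero]
    rw [deriv_div_add_mul_rpow_add_mul_inv x _ _ ht, hcoeff, hexp]
end

section
/- Let ε, λ, δ, c be real constants. Then the function u(t,x) = (x + δ ln t + c)/t is a smooth solution of u_t + u u_x + λ t^{−1} u_{xx} + ε u_{xxt} = δ t^{−2} on the domain t > 0. -/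
section Affine

variable (a b : ℝ → ℝ) (t y : ℝ)

theorem partialX_affine : partialX (fun t y => a t * y + b t) t y = a t := by
  simp [partialX]

theorem partialXX_affine : partialXX (fun t y => a t * y + b t) t y = 0 := by
  simp only [partialXX, partialX_affine, deriv_const]

theorem partialXXT_affine : partialXXT (fun t y => a t * y + b t) t y = 0 := by
  simp only [partialXXT, partialXX_affine, deriv_const]

end Affine

open Real

noncomputable def degenerateSolution (δ c t x : ℝ) : ℝ := (x + δ * log t + c) / t

section DegenerateSolution

variable (δ c : ℝ)

theorem degenerateSolution_eq_affine :
    degenerateSolution δ c = fun t x => t⁻¹ * x + (δ * log t + c) / t := by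
  funext t x
  rw [degenerateSolution, add_assoc, add_div, div_eq_inv_mul]

theorem contDiffOn_degenerateSolution :
    ContDiffOn ℝ (⊤ : ℕ∞) (fun p : ℝ × ℝ => degenerateSolution δ c p.1 p.2)
      (Set.Ioi 0 ×ˢ Set.univ) := by
  have hlog : ContDiffOn ℝ (⊤ : ℕ∞) (fun p : ℝ × ℝ => log p.1) (Set.Ioi 0 ×ˢ Set.univ) :=
    contDiffOn_log.comp contDiffOn_fst fun p hp => ne_of_gt hp.1
  exact ((contDiffOn_snd.add (contDiffOn_const.mul hlog)).add contDiffOn_const).div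
    contDiffOn_fst fun p hp => ne_of_gt hp.1

theorem hasDerivAt_degenerateSolution_time {t : ℝ} (ht : t ≠ 0) (x : ℝ) :
    HasDerivAt (fun s => degenerateSolution δ c s x)
      ((δ - (x + δ * log t + c)) / t ^ 2) t := by
  have hnum : HasDerivAt (fun s => x + δ * log s + c) (δ * t⁻¹) t :=
    (((hasDerivAt_log ht).const_mul δ).const_add x).add_const c
  exact (hnum.div (hasDerivAt_id' t) ht).congr_deriv (by field_simp)

theorem partialX_degenerateSolution (t x : ℝ) :
    partialX (degenerateSolution δ c) t x = t⁻¹ := by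
  rw [degenerateSolution_eq_affine, partialX_affine]

theorem partialXX_degenerateSolution (t x : ℝ) :
    partialXX (degenerateSolution δ c) t x = 0 := by
  rw [degenerateSolution_eq_affine, partialXX_affine]

theorem partialXXT_degenerateSolution (t x : ℝ) :
    partialXXT (degenerateSolution δ c) t x = 0 := by
  rw [degenerateSolution_eq_affine, partialXXT_affine]

end DegenerateSolution

/-- `u(t,x) = (x + δ ln t + c)/t` is a "degenerate" exact solution of
`u_t + u u_x + λ t⁻¹ u_xx + ε u_xxt = δ t⁻²` on the domain `t > 0`. -/
theorem stmt_15 (ε lam δ c : ℝ)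
    (u : ℝ → ℝ → ℝ)
    (hu : ∀ t x, u t x = (x + δ * Real.log t + c) / t) :
    ContDiffOn ℝ (⊤ : ℕ∞) (fun p : ℝ × ℝ => u p.1 p.2) (Set.Ioi 0 ×ˢ Set.univ) ∧
    ∀ t, 0 < t → ∀ x, partialT u t x + u t x * partialX u t x
      + lam * t ^ (-1 : ℝ) * partialXX u t x + ε * partialXXT u t x
      = δ * t ^ (-2 : ℝ) := by
  obtain rfl : u = degenerateSolution δ c := funext₂ hu
  refine ⟨contDiffOn_degenerateSolution δ c, fun t ht x => ?_⟩
  have hT : partialT (degenerateSolution δ c) t x = (δ - (x + δ * log t + c)) / t ^ 2 :=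
    (hasDerivAt_degenerateSolution_time δ c ht.ne' x).deriv
  rw [hT, partialX_degenerateSolution, partialXX_degenerateSolution,
    partialXXT_degenerateSolution, degenerateSolution, rpow_neg_one, rpow_neg ht.le, rpow_two]
  field_simp
  ring
end

section
/- Let ε be a nonzero real constant and let s ∈ {1, −1}. Then the function φ(ω) = s(1 − 12ε)/(10ε) − (12/5)·tanh(ω) + s·(6/5)·tanh²(ω) is a solution of the ODE εα φ''' + φ'' − φφ' + αφ' = 0 for all ω ∈ ℝ, where α = s/(10ε). -/
/-!
Every derivative of a polynomial in `tanh` is again a polynomial in `tanh`, because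
`tanh' = 1 - tanh²`: differentiation acts on `p` as `p ↦ p' · (1 - X²)`. So `φ''`, `φ'''` and
the whole left-hand side of the ODE are polynomials in `tanh ω`, and the equation reduces to a
polynomial identity in `tanh ω`, which holds once `s² = 1` and `εα = s/10`.
-/

open Polynomial Real

theorem Real.hasDerivAt_tanh (x : ℝ) : HasDerivAt tanh (1 - tanh x ^ 2) x := by
  have hcosh : cosh x ≠ 0 := (cosh_pos x).ne'
  have h := (hasDerivAt_sinh x).div (hasDerivAt_cosh x) hcosh
  rw [show sinh / cosh = tanh from funext fun y => (tanh_eq_sinh_div_cosh y).symm] at h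
  refine h.congr_deriv ?_
  rw [tanh_eq_sinh_div_cosh]
  field_simp

namespace Polynomial

/-- The action of `d/dω` on `ω ↦ p (tanh ω)`, as an operation on `p`. -/
noncomputable def tanhDerivative (p : ℝ[X]) : ℝ[X] := derivative p * (1 - X ^ 2)

theorem hasDerivAt_eval_tanh (p : ℝ[X]) (x : ℝ) :
    HasDerivAt (fun y => p.eval (tanh y)) ((tanhDerivative p).eval (tanh x)) x :=
  ((p.hasDerivAt (tanh x)).comp x (hasDerivAt_tanh x)).congr_deriv (by simp [tanhDerivative])

theorem deriv_eval_tanh (p : ℝ[X]) :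
    deriv (fun y => p.eval (tanh y)) = fun x => (tanhDerivative p).eval (tanh x) :=
  _root_.funext fun x => (hasDerivAt_eval_tanh p x).deriv

theorem iteratedDeriv_eval_tanh (n : ℕ) (p : ℝ[X]) :
    iteratedDeriv n (fun y => p.eval (tanh y)) = fun x => (tanhDerivative^[n] p).eval (tanh x) := by
  induction n generalizing p with
  | zero => simp
  | succ n ih => rw [iteratedDeriv_succ', deriv_eval_tanh, ih, Function.iterate_succ_apply]

end Polynomial

/-- for `s = ±1` and `α = s/(10ε)`, the function
`φ(ω) = s(1-12ε)/(10ε) - (12/5)tanh ω + s(6/5)tanh² ω`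
solves the reduced traveling-wave ODE `εα φ''' + φ'' - φφ' + αφ' = 0` on `ℝ`. -/
theorem stmt_19 (ε : ℝ) (hε : ε ≠ 0) (s : ℝ) (hs : s = 1 ∨ s = -1)
    (α : ℝ) (hα : α = s / (10 * ε))
    (φ : ℝ → ℝ)
    (hφ : ∀ ω, φ ω = s * (1 - 12 * ε) / (10 * ε)
      - 12 / 5 * Real.tanh ω + s * (6 / 5) * Real.tanh ω ^ 2) :
    ∀ ω, ε * α * iteratedDeriv 3 φ ω + iteratedDeriv 2 φ ω
      - φ ω * deriv φ ω + α * deriv φ ω = 0 := by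
  set p : ℝ[X] := C (s * (1 - 12 * ε) / (10 * ε)) - C (12 / 5) * X + C (s * (6 / 5)) * X ^ 2
  have hφp : φ = fun ω => p.eval (tanh ω) := funext fun ω => by simp [p, hφ]
  have residual_eq_zero : ∀ t, ε * α * (tanhDerivative^[3] p).eval t + (tanhDerivative^[2] p).eval t
      - p.eval t * (tanhDerivative p).eval t + α * (tanhDerivative p).eval t = 0 := by
    intro t
    simp only [p, tanhDerivative, Function.iterate_succ_apply, Function.iterate_zero_apply,
      derivative_sub, derivative_neg, derivative_mul, derivative_C, derivative_X, derivative_one,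
      derivative_X_pow_succ, Nat.cast_one, map_add, map_mul, map_one, pow_one,
      zero_mul, mul_zero, mul_one, zero_add, add_zero, zero_sub, neg_zero, mul_neg, neg_add_rev,
      eval_add, eval_sub, eval_neg, eval_mul, eval_pow, eval_C, eval_X, eval_one]
    subst hα
    rcases hs with rfl | rfl <;> · field_simp; ring
  intro ω
  simpa [hφp, iteratedDeriv_eval_tanh, deriv_eval_tanh] using residual_eq_zero (tanh ω)
end
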